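/- arXiv:2508.03359 — 3 statements merged into one kernel-verified Lean document; each statement's English description precedes it below -/
import Mathlib

section
/- For any integer m ≥ 1 and real u with 1/2 < u < 1, define g_m(u) = u^m(2u-1)/(u^m - (1-u)^m). Define α_i = B^{g_m(u)(1-u)^{i-1} u^{-i}} for 1 ≤ i ≤ m-1 and α_m = B/(α_1⋯α_{m-1}), where B > 1. Then α_1^u = α_1^{2u-1} α_2^u = ⋯ = (α_1⋯α_{m-1})^{2u-1} α_m^u = B^{g_m(u)}. -/
/-!
Write `r = (1 - u) / u` and `c = g / (2u - 1)`. The exponent of `α_i` is `c (r^(i-1) - r^i)`, so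
the exponents of `α_1 ⋯ α_k` telescope to `c (1 - r^k)`. Since `u r = 1 - u`, each of the claimed
equalities becomes a linear identity in the exponents; for the last one, `α_m` has exponent
`1 - c (1 - r^(m-1))`, and the choice of `g` is exactly what makes `c (1 - r^m) = 1`.
-/

open Finset Real

lemma pow_sub_one_sub_pow_ne_zero {u : ℝ} (hu : 1 / 2 < u) {m : ℕ} (hm : m ≠ 0) :
    u ^ m - (1 - u) ^ m ≠ 0 := by
  have h : |1 - u| < u := abs_lt.2 ⟨by linarith, by linarith⟩
  have : (1 - u) ^ m < u ^ m :=
    ((le_abs_self _).trans_eq (abs_pow _ _)).trans_lt (pow_lt_pow_left₀ h (abs_nonneg _) hm)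
  exact sub_ne_zero.2 this.ne'

lemma mul_one_sub_pow_mul_rpow_neg_eq {u : ℝ} (hu : 1 / 2 < u) (g : ℝ) (j : ℕ) :
    g * (1 - u) ^ j * u ^ (-((j + 1 : ℕ) : ℝ)) =
      g / (2 * u - 1) * (((1 - u) / u) ^ j - ((1 - u) / u) ^ (j + 1)) := by
  have hu0 : u ≠ 0 := by linarith
  have h2u : 2 * u - 1 ≠ 0 := by linarith
  rw [rpow_neg (by linarith), rpow_natCast, div_pow, div_pow, div_mul_eq_mul_div, eq_div_iff h2u]
  field_simp
  ring

lemma sum_Icc_mul_one_sub_pow_mul_rpow_neg {u : ℝ} (hu : 1 / 2 < u) (g : ℝ) (k : ℕ) :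
    ∑ i ∈ Icc 1 k, g * (1 - u) ^ (i - 1) * u ^ (-(i : ℝ)) =
      g / (2 * u - 1) * (1 - ((1 - u) / u) ^ k) := by
  induction k with
  | zero => simp
  | succ n ih =>
    rw [sum_Icc_succ_top (by omega), ih, Nat.add_sub_cancel, mul_one_sub_pow_mul_rpow_neg_eq hu]
    ring

lemma prod_Icc_eq_rpow {u B g : ℝ} (hu : 1 / 2 < u) (hB : 0 < B) {α : ℕ → ℝ} {k : ℕ}
    (hα : ∀ i ∈ Icc 1 k, α i = B ^ (g * (1 - u) ^ (i - 1) * u ^ (-(i : ℝ)))) :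
    ∏ i ∈ Icc 1 k, α i = B ^ (g / (2 * u - 1) * (1 - ((1 - u) / u) ^ k)) := by
  rw [prod_congr rfl hα, ← rpow_sum_of_pos hB, sum_Icc_mul_one_sub_pow_mul_rpow_neg hu]

lemma div_mul_one_sub_div_pow_eq_one {u : ℝ} (hu : 1 / 2 < u) {m : ℕ} (hm : m ≠ 0) :
    u ^ m * (2 * u - 1) / (u ^ m - (1 - u) ^ m) / (2 * u - 1) * (1 - ((1 - u) / u) ^ m) = 1 := by
  have hu0 : u ≠ 0 := by linarith
  have h2u : 2 * u - 1 ≠ 0 := by linarith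
  have hD := pow_sub_one_sub_pow_ne_zero hu hm
  rw [div_pow]
  field_simp

lemma rpow_mul_add_rpow_mul {B : ℝ} (hB : 0 < B) (a b s t : ℝ) :
    (B ^ a) ^ s * (B ^ b) ^ t = B ^ (a * s + b * t) := by
  rw [← rpow_mul hB.le, ← rpow_mul hB.le, rpow_add hB]

lemma div_rpow_eq_rpow_one_sub {B : ℝ} (hB : 0 < B) (a : ℝ) : B / B ^ a = B ^ (1 - a) := by
  rw [rpow_sub hB, rpow_one]

lemma exponent_identity {u c r : ℝ} (hr : u * r = 1 - u) (n : ℕ) :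
    c * (1 - r ^ n) * (2 * u - 1) + c * (r ^ n - r ^ (n + 1)) * u = c * (2 * u - 1) := by
  linear_combination (-c * r ^ n) * hr

lemma exponent_identity_last {u c r : ℝ} (hr : u * r = 1 - u) (n : ℕ)
    (hc : c * (1 - r ^ (n + 1)) = 1) :
    c * (1 - r ^ n) * (2 * u - 1) + (1 - c * (1 - r ^ n)) * u = c * (2 * u - 1) := by
  linear_combination (-c * r ^ n) * hr - u * hc

theorem stmt_0_general (m : ℕ) (u B g : ℝ)
    (hu1 : 1/2 < u) (hB : 1 < B)
    (hg : g = u ^ m * (2 * u - 1) / (u ^ m - (1 - u) ^ m))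
    (α : ℕ → ℝ)
    (hα : ∀ i, 1 ≤ i → i ≤ m - 1 →
      α i = B ^ (g * (1 - u) ^ (i - 1) * u ^ (-(i : ℝ))))
    (hαm : α m = B / ∏ i ∈ Finset.Icc 1 (m - 1), α i) :
    ∀ k, 1 ≤ k → k ≤ m →
      (∏ i ∈ Finset.Icc 1 (k - 1), α i) ^ (2 * u - 1) * α k ^ u = B ^ g := by
  have hB0 : 0 < B := by linarith
  have hc : g / (2 * u - 1) * (2 * u - 1) = g := div_mul_cancel₀ g (by linarith)
  have hr : u * ((1 - u) / u) = 1 - u := mul_div_cancel₀ _ (by linarith)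
  have hprod : ∀ n ≤ m - 1,
      ∏ i ∈ Icc 1 n, α i = B ^ (g / (2 * u - 1) * (1 - ((1 - u) / u) ^ n)) := fun n hn =>
    prod_Icc_eq_rpow hu1 hB0 fun i hi => hα i (mem_Icc.1 hi).1 ((mem_Icc.1 hi).2.trans hn)
  rintro k hk hkm
  obtain ⟨n, rfl⟩ := Nat.exists_eq_add_of_le' hk
  rw [Nat.add_sub_cancel, hprod n (by omega)]
  rcases hkm.lt_or_eq with hlt | rfl
  · rw [hα (n + 1) hk (by omega), Nat.add_sub_cancel, mul_one_sub_pow_mul_rpow_neg_eq hu1,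
      rpow_mul_add_rpow_mul hB0, exponent_identity hr, hc]
  · have hc_last : g / (2 * u - 1) * (1 - ((1 - u) / u) ^ (n + 1)) = 1 := by
      rw [hg]
      exact div_mul_one_sub_div_pow_eq_one hu1 n.succ_ne_zero
    rw [hαm, Nat.add_sub_cancel, hprod n le_rfl, div_rpow_eq_rpow_one_sub hB0,
      rpow_mul_add_rpow_mul hB0, exponent_identity_last hr n hc_last, hc]

theorem stmt_0 (m : ℕ) (hm : 1 ≤ m) (u B g : ℝ)
    (hu1 : 1/2 < u) (hu2 : u < 1) (hB : 1 < B)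
    (hg : g = u ^ m * (2 * u - 1) / (u ^ m - (1 - u) ^ m))
    (α : ℕ → ℝ)
    (hα : ∀ i, 1 ≤ i → i ≤ m - 1 →
      α i = B ^ (g * (1 - u) ^ (i - 1) * u ^ (-(i : ℝ))))
    (hαm : α m = B / ∏ i ∈ Finset.Icc 1 (m - 1), α i) :
    ∀ k, 1 ≤ k → k ≤ m →
      (∏ i ∈ Finset.Icc 1 (k - 1), α i) ^ (2 * u - 1) * α k ^ u = B ^ g :=
  stmt_0_general m u B g hu1 hB hg α hα hαm
end

section
/- Let ν be a Borel measure on a metric space, F a closed set, f : F → X a bijection with C⁻¹|x−y|/|F| ≤ |f(x)−f(y)| ≤ C|x−y|/|F|, and suppose (ν∘f⁻¹)/ν(F) ≤ C ν. If x ∈ F and f(x) satisfies ν(B(f(x),r)) ≤ r^γ for all 0 < r < 1/N, then for all 0 < ρ < |F|/(CN): ν(B(x,ρ) ∩ F)/ν(F) ≤ C^{γ+1} (ρ/|F|)^γ. -/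
open MeasureTheory

/- The upper Lipschitz bound, with constant `K = C / |F|`, maps `B(x, ρ) ∩ F` into `B(f x, Kρ)`,
so the comparison `ν ∘ f⁻¹ / ν F ≤ C ν` bounds its relative mass by `C ν(B(f x, Kρ))`. Since
`ρ < |F| / (C N)` gives `Kρ < 1 / N`, the Hölder bound at `f x` yields
`C (Cρ / |F|)^γ = C^(γ+1) (ρ / |F|)^γ`. -/

theorem Metric.ball_inter_subset_inter_preimage_ball {X Y : Type*} [PseudoMetricSpace X]
    [PseudoMetricSpace Y] {F : Set X} {f : X → Y} {x : X} {K : ℝ} (hK : 0 < K)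
    (hlip : ∀ y ∈ F, dist (f x) (f y) ≤ K * dist x y) (ρ : ℝ) :
    Metric.ball x ρ ∩ F ⊆ F ∩ f ⁻¹' Metric.ball (f x) (K * ρ) := by
  rintro y ⟨hyx, hyF⟩
  refine ⟨hyF, ?_⟩
  rw [Set.mem_preimage, Metric.mem_ball, dist_comm]
  rw [Metric.mem_ball, dist_comm] at hyx
  exact (hlip y hyF).trans_lt (mul_lt_mul_of_pos_left hyx hK)

theorem measure_ball_inter_div_le_of_lipschitz {X Y : Type*} [PseudoMetricSpace X]
    [PseudoMetricSpace Y] [MeasurableSpace X] [MeasurableSpace Y] [OpensMeasurableSpace Y]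
    {μ : Measure X} {ν : Measure Y} {F : Set X} {f : X → Y} {x : X} {K : ℝ} {c : ENNReal}
    (hK : 0 < K) (hlip : ∀ y ∈ F, dist (f x) (f y) ≤ K * dist x y)
    (hcomp : ∀ A : Set Y, MeasurableSet A → μ (F ∩ f ⁻¹' A) / μ F ≤ c * ν A) (ρ : ℝ) :
    μ (Metric.ball x ρ ∩ F) / μ F ≤ c * ν (Metric.ball (f x) (K * ρ)) :=
  calc μ (Metric.ball x ρ ∩ F) / μ F
      ≤ μ (F ∩ f ⁻¹' Metric.ball (f x) (K * ρ)) / μ F :=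
        ENNReal.div_le_div_right
          (measure_mono (Metric.ball_inter_subset_inter_preimage_ball hK hlip ρ)) _
    _ ≤ c * ν (Metric.ball (f x) (K * ρ)) := hcomp _ Metric.isOpen_ball.measurableSet

theorem Real.mul_mul_rpow_eq_rpow_add_one_mul {C t : ℝ} (hC : 0 < C) (ht : 0 ≤ t) (γ : ℝ) :
    C * (C * t) ^ γ = C ^ (γ + 1) * t ^ γ := by
  rw [Real.mul_rpow hC.le ht, Real.rpow_add_one hC.ne']
  ring

theorem stmt_8_general {X : Type*} [MetricSpace X] [MeasurableSpace X] [BorelSpace X]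
    (ν : Measure X) (F : Set X)
    (f : X → X)
    (C : ℝ) (hC : 1 ≤ C)
    (hlip : ∀ x ∈ F, ∀ y ∈ F,
      C⁻¹ * (dist x y / Metric.diam F) ≤ dist (f x) (f y) ∧
      dist (f x) (f y) ≤ C * (dist x y / Metric.diam F))
    (hcomp : ∀ A : Set X, MeasurableSet A →
      ν (F ∩ f ⁻¹' A) / ν F ≤ ENNReal.ofReal C * ν A)
    (γ : ℝ) (N : ℕ) (hN : 1 ≤ N)
    (x : X) (hx : x ∈ F)
    (hholder : ∀ r : ℝ, 0 < r → r < 1 / (N : ℝ) →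
      ν (Metric.ball (f x) r) ≤ ENNReal.ofReal (r ^ γ)) :
    ∀ ρ : ℝ, 0 < ρ → ρ < Metric.diam F / (C * N) →
      ν (Metric.ball x ρ ∩ F) / ν F ≤
        ENNReal.ofReal (C ^ (γ + 1) * (ρ / Metric.diam F) ^ γ) := by
  intro ρ hρ hρlt
  set D := Metric.diam F
  have hC0 : 0 < C := one_pos.trans_le hC
  have hN0 : (0 : ℝ) < N := by exact_mod_cast hN
  have hD : 0 < D := by
    by_contra! hD
    exact (hρ.trans hρlt).not_ge (div_nonpos_of_nonpos_of_nonneg hD (by positivity))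
  have hK : 0 < C / D := div_pos hC0 hD
  have hlip_x : ∀ y ∈ F, dist (f x) (f y) ≤ C / D * dist x y := fun y hy => by
    simpa only [mul_div_assoc', div_mul_eq_mul_div] using (hlip x hx y hy).2
  have hradius : C / D * ρ < 1 / N :=
    calc C / D * ρ = ρ / (D / (C * N)) * (1 / N) := by field_simp
      _ < 1 * (1 / N) := by gcongr; exact (div_lt_one (by positivity)).2 hρlt
      _ = 1 / N := one_mul _
  calc ν (Metric.ball x ρ ∩ F) / ν F
      ≤ ENNReal.ofReal C * ν (Metric.ball (f x) (C / D * ρ)) :=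
        measure_ball_inter_div_le_of_lipschitz hK hlip_x hcomp ρ
    _ ≤ ENNReal.ofReal C * ENNReal.ofReal ((C / D * ρ) ^ γ) := by
        gcongr
        exact hholder _ (by positivity) hradius
    _ = ENNReal.ofReal (C ^ (γ + 1) * (ρ / D) ^ γ) := by
        rw [← ENNReal.ofReal_mul hC0.le, div_mul_eq_mul_div, mul_div_assoc,
          Real.mul_mul_rpow_eq_rpow_add_one_mul hC0 (by positivity)]

theorem stmt_8 {X : Type*} [MetricSpace X] [MeasurableSpace X] [BorelSpace X]
    (ν : Measure X) [IsProbabilityMeasure ν] (F : Set X) (hF : IsClosed F)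
    (f : X → X) (hbij : Set.BijOn f F Set.univ)
    (C : ℝ) (hC : 1 ≤ C)
    (hlip : ∀ x ∈ F, ∀ y ∈ F,
      C⁻¹ * (dist x y / Metric.diam F) ≤ dist (f x) (f y) ∧
      dist (f x) (f y) ≤ C * (dist x y / Metric.diam F))
    (hcomp : ∀ A : Set X, MeasurableSet A →
      ν (F ∩ f ⁻¹' A) / ν F ≤ ENNReal.ofReal C * ν A)
    (γ : ℝ) (hγ : 0 < γ) (N : ℕ) (hN : 1 ≤ N)
    (x : X) (hx : x ∈ F)
    (hholder : ∀ r : ℝ, 0 < r → r < 1 / (N : ℝ) →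
      ν (Metric.ball (f x) r) ≤ ENNReal.ofReal (r ^ γ)) :
    ∀ ρ : ℝ, 0 < ρ → ρ < Metric.diam F / (C * N) →
      ν (Metric.ball x ρ ∩ F) / ν F ≤
        ENNReal.ofReal (C ^ (γ + 1) * (ρ / Metric.diam F) ^ γ) :=
  stmt_8_general ν F f C hC hlip hcomp γ N hN x hx hholder
end

section
/- Fix integers m ≥ 1 and n ≥ 1, a word (a_1,…,a_n) ∈ ℕ^n, and reals α_1,…,α_m > 1. Let A be the union of cylinders I_{n+m}(a_1,…,a_n, b_1,…,b_m) over all (b_1,…,b_m) with b_i even and α_i^n ≤ b_i ≤ 2α_i^n for each i. Let two distinct such cylinders differ first at position n+k (1 ≤ k ≤ m). Then their distance is at least 1/(32·q(a_1,…,a_n,b_1,…,b_k)²), where q denotes the continued-fraction denominator of the word. -/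
/-- The Gauss map `x ↦ 1/x mod 1` (with `G 0 = 0`). -/
noncomputable def gaussMap (x : ℝ) : ℝ := Int.fract x⁻¹

/-- The level-`n` continued fraction cylinder with digits `a 1, …, a n`. -/
noncomputable def cfCyl (n : ℕ) (a : ℕ → ℕ) : Set ℝ :=
  {x | x ∈ Set.Ioo (0 : ℝ) 1 ∧ ∀ k, 1 ≤ k → k ≤ n → ⌊(gaussMap^[k - 1] x)⁻¹⌋ = (a k : ℤ)}

/-- Continued fraction denominators: `q 0 = 1`, `q 1 = a 1`,
`q (n+2) = a (n+2) * q (n+1) + q n`. -/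
def cfDenom (a : ℕ → ℕ) : ℕ → ℕ
  | 0 => 1
  | 1 => a 1
  | n + 2 => a (n + 2) * cfDenom a (n + 1) + cfDenom a n

/-
Two points with the same first `N = n + k - 1` digits are images `(p_N + t p_{N-1}) / (q_N + t q_{N-1})`
of their `N`-th Gauss iterates `t`, and since `p_N q_{N-1} - p_{N-1} q_N = ±1`, their distance is the distance
of these iterates divided by two denominators, each at most `2 q_N`. The iterates have first digits
`A ≠ B` of the same parity; if `A < B`, one lies in `(1/(A+1), 1/A]` and the other in `[0, 1/(A+2)]`,
so they are at least `1/((A+1)(B+1))` apart. With `B ≤ 2A` (both digits lie in `[α^n, 2α^n]`) and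
`A q_N ≤ q_{N+1}` this gives `1/(32 q_{N+1}^2)`.
-/

open Set

def cfNum (a : ℕ → ℕ) : ℕ → ℕ
  | 0 => 0
  | 1 => 1
  | n + 2 => a (n + 2) * cfNum a (n + 1) + cfNum a n

section Denominators

variable {a : ℕ → ℕ}

theorem one_le_cfDenom (ha : ∀ i, 1 ≤ a i) : ∀ N, 1 ≤ cfDenom a N
  | 0 => le_rfl
  | 1 => ha 1
  | N + 2 => by
    have := one_le_cfDenom ha (N + 1)
    have := ha (N + 2)
    simp only [cfDenom]
    nlinarith

theorem cfDenom_le_cfDenom_succ (ha : ∀ i, 1 ≤ a i) : ∀ N, cfDenom a N ≤ cfDenom a (N + 1)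
  | 0 => ha 1
  | N + 1 => by
    have := one_le_cfDenom ha (N + 1)
    have := ha (N + 2)
    show cfDenom a (N + 1) ≤ a (N + 2) * cfDenom a (N + 1) + cfDenom a N
    nlinarith

theorem cfNum_succ_mul_cfDenom_sub (a : ℕ → ℕ) : ∀ N,
    (cfNum a (N + 1) : ℤ) * cfDenom a N - cfNum a N * cfDenom a (N + 1) = (-1) ^ N
  | 0 => by simp [cfNum, cfDenom]
  | N + 1 => by
    have ih := cfNum_succ_mul_cfDenom_sub a N
    simp only [cfNum, cfDenom, Nat.cast_add, Nat.cast_mul] at ih ⊢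
    linear_combination -ih

end Denominators

theorem gaussMap_mem_Ico (x : ℝ) : gaussMap x ∈ Ico 0 1 :=
  ⟨Int.fract_nonneg _, Int.fract_lt_one _⟩

theorem gaussMap_iterate_succ_mem_Ico (x : ℝ) (N : ℕ) : gaussMap^[N + 1] x ∈ Ico 0 1 := by
  rw [Function.iterate_succ_apply']
  exact gaussMap_mem_Ico _

theorem gaussMap_eq_of_floor_inv_eq {x : ℝ} {c : ℤ} (h : ⌊x⁻¹⌋ = c) : gaussMap x = x⁻¹ - c := by
  rw [gaussMap, ← Int.self_sub_floor, h]

theorem mem_Ioc_of_floor_inv_eq {u : ℝ} {c : ℕ} (hc : 1 ≤ c) (hu : 0 ≤ u) (h : ⌊u⁻¹⌋ = c) :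
    u ∈ Ioc (1 / ((c : ℝ) + 1)) (1 / c) := by
  have hu0 : u ≠ 0 := by
    rintro rfl
    rw [inv_zero, Int.floor_zero] at h
    omega
  have hcu : (c : ℝ) ≤ u⁻¹ := by exact_mod_cast h ▸ Int.floor_le u⁻¹
  have huc : u⁻¹ < c + 1 := by exact_mod_cast h ▸ Int.lt_floor_add_one u⁻¹
  have hc0 : (0 : ℝ) < c := by exact_mod_cast hc
  have hupos : 0 < u := hu.lt_of_ne' hu0
  constructor
  · rw [one_div]; exact inv_lt_of_inv_lt₀ hupos huc
  · rw [one_div]; exact (le_inv_comm₀ hupos hc0).mpr hcu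

theorem cfCyl_anti {m n : ℕ} (a : ℕ → ℕ) (h : m ≤ n) : cfCyl n a ⊆ cfCyl m a :=
  fun _ hx => ⟨hx.1, fun k hk1 hkm => hx.2 k hk1 (hkm.trans h)⟩

theorem cfCyl_congr {n : ℕ} {a b : ℕ → ℕ} (h : ∀ i, 1 ≤ i → i ≤ n → a i = b i) :
    cfCyl n a = cfCyl n b := by
  ext x
  refine and_congr_right fun _ => forall_congr' fun k => imp_congr_right fun hk1 => ?_
  exact imp_congr_right fun hkn => by rw [h k hk1 hkn]

theorem mul_cfDenom_add_eq_cfNum_add {a : ℕ → ℕ} (ha : ∀ i, 1 ≤ a i) :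
    ∀ N, ∀ x ∈ cfCyl (N + 1) a,
      x * (cfDenom a (N + 1) + gaussMap^[N + 1] x * cfDenom a N) =
        cfNum a (N + 1) + gaussMap^[N + 1] x * cfNum a N
  | 0, x, hx => by
    have hx0 : x ≠ 0 := hx.1.1.ne'
    have hT : gaussMap^[0 + 1] x = x⁻¹ - a 1 :=
      gaussMap_eq_of_floor_inv_eq (hx.2 1 le_rfl le_rfl)
    simp only [cfDenom, cfNum, hT]
    field_simp
    ring
  | N + 1, x, hx => by
    have ih := mul_cfDenom_add_eq_cfNum_add ha N x (cfCyl_anti a (Nat.le_succ _) hx)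
    set t := gaussMap^[N + 1] x
    have hdigit : ⌊t⁻¹⌋ = a (N + 2) := hx.2 (N + 2) (by omega) le_rfl
    have ht0 : t ≠ 0 := by
      rintro ht
      rw [ht, inv_zero, Int.floor_zero] at hdigit
      have := ha (N + 2)
      omega
    have hs : gaussMap^[N + 2] x = t⁻¹ - a (N + 2) := by
      rw [Function.iterate_succ_apply']
      exact gaussMap_eq_of_floor_inv_eq hdigit
    have hts : t * (a (N + 2) + gaussMap^[N + 2] x) = 1 := by
      rw [hs]
      field_simp
      ring
    simp only [cfDenom, cfNum, Nat.cast_add, Nat.cast_mul]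
    linear_combination (a (N + 2) + gaussMap^[N + 2] x) * ih -
      (x * cfDenom a N - cfNum a N) * hts

theorem abs_sub_mul_eq_abs_gaussMap_iterate_sub {a : ℕ → ℕ} (ha : ∀ i, 1 ≤ a i) (N : ℕ)
    {x y : ℝ} (hx : x ∈ cfCyl (N + 1) a) (hy : y ∈ cfCyl (N + 1) a) :
    |x - y| * ((cfDenom a (N + 1) + gaussMap^[N + 1] x * cfDenom a N) *
      (cfDenom a (N + 1) + gaussMap^[N + 1] y * cfDenom a N)) =
        |gaussMap^[N + 1] x - gaussMap^[N + 1] y| := by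
  have hdet : (cfNum a (N + 1) * cfDenom a N - cfNum a N * cfDenom a (N + 1) : ℝ) = (-1) ^ N := by
    exact_mod_cast cfNum_succ_mul_cfDenom_sub a N
  have key : (x - y) * ((cfDenom a (N + 1) + gaussMap^[N + 1] x * cfDenom a N) *
      (cfDenom a (N + 1) + gaussMap^[N + 1] y * cfDenom a N)) =
        (gaussMap^[N + 1] y - gaussMap^[N + 1] x) * (-1) ^ N := by
    linear_combination
      (cfDenom a (N + 1) + gaussMap^[N + 1] y * cfDenom a N) *
          mul_cfDenom_add_eq_cfNum_add ha N x hx -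
        (cfDenom a (N + 1) + gaussMap^[N + 1] x * cfDenom a N) *
          mul_cfDenom_add_eq_cfNum_add ha N y hy +
        (gaussMap^[N + 1] y - gaussMap^[N + 1] x) * hdet
  have hpos : ∀ z : ℝ, 0 ≤ z → 0 ≤ (cfDenom a (N + 1) + z * cfDenom a N : ℝ) := fun z hz => by
    positivity
  rw [← abs_of_nonneg (mul_nonneg (hpos _ (gaussMap_iterate_succ_mem_Ico x N).1)
    (hpos _ (gaussMap_iterate_succ_mem_Ico y N).1)), ← abs_mul, key, abs_mul, abs_neg_one_pow,
    mul_one, abs_sub_comm]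

theorem one_div_mul_le_sub_of_add_two_le {A B u v : ℝ} (hA : 0 ≤ A) (hAB : A + 2 ≤ B)
    (hu : 1 / (A + 1) < u) (hv : v ≤ 1 / B) : 1 / ((A + 1) * (B + 1)) ≤ u - v := by
  have hvA : v ≤ 1 / (A + 2) := hv.trans (one_div_le_one_div_of_le (by positivity) hAB)
  have hsub : 1 / (A + 1) - 1 / (A + 2) = 1 / ((A + 1) * (A + 2)) := by
    field_simp
    ring
  have hle : 1 / ((A + 1) * (B + 1)) ≤ 1 / ((A + 1) * (A + 2)) :=
    one_div_le_one_div_of_le (by positivity) (by nlinarith)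
  linarith

theorem one_div_le_dist_of_mem_cfCyl {a b : ℕ → ℕ} (ha : ∀ i, 1 ≤ a i) {N : ℕ}
    (hb : 1 ≤ b (N + 2)) (hagree : ∀ i, 1 ≤ i → i ≤ N + 1 → a i = b i)
    (hgap : a (N + 2) + 2 ≤ b (N + 2) ∨ b (N + 2) + 2 ≤ a (N + 2))
    {x y : ℝ} (hx : x ∈ cfCyl (N + 2) a) (hy : y ∈ cfCyl (N + 2) b) :
    1 / (4 * ((a (N + 2) + 1) * (b (N + 2) + 1)) * cfDenom a (N + 1) ^ 2) ≤ dist x y := by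
  have hdist := abs_sub_mul_eq_abs_gaussMap_iterate_sub ha N (cfCyl_anti a (Nat.le_succ _) hx)
    ((cfCyl_congr hagree).symm ▸ cfCyl_anti b (Nat.le_succ _) hy)
  have hu := gaussMap_iterate_succ_mem_Ico x N
  have hv := gaussMap_iterate_succ_mem_Ico y N
  have huA := mem_Ioc_of_floor_inv_eq (ha (N + 2)) hu.1 (hx.2 (N + 2) (by omega) le_rfl)
  have hvB := mem_Ioc_of_floor_inv_eq hb hv.1 (hy.2 (N + 2) (by omega) le_rfl)
  set u := gaussMap^[N + 1] x
  set v := gaussMap^[N + 1] y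
  have huv : 1 / ((a (N + 2) + 1) * (b (N + 2) + 1) : ℝ) ≤ |u - v| := by
    rcases hgap with h | h
    · exact (one_div_mul_le_sub_of_add_two_le (by positivity) (by exact_mod_cast h)
        huA.1 hvB.2).trans (le_abs_self _)
    · rw [mul_comm, abs_sub_comm]
      exact (one_div_mul_le_sub_of_add_two_le (by positivity) (by exact_mod_cast h)
        hvB.1 huA.2).trans (le_abs_self _)
  have hQ : (cfDenom a N : ℝ) ≤ cfDenom a (N + 1) := by
    exact_mod_cast cfDenom_le_cfDenom_succ ha N
  have hQ1 : (1 : ℝ) ≤ cfDenom a (N + 1) := by exact_mod_cast one_le_cfDenom ha (N + 1)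
  set Q := (cfDenom a (N + 1) : ℝ)
  have hD : ∀ t ∈ Ico (0 : ℝ) 1, 0 < Q + t * cfDenom a N ∧ Q + t * cfDenom a N ≤ 2 * Q :=
    fun t ht => ⟨by nlinarith [ht.1], by nlinarith [ht.2]⟩
  have hDD : 0 < (Q + u * cfDenom a N) * (Q + v * cfDenom a N) :=
    mul_pos (hD u hu).1 (hD v hv).1
  have hDD4 : (Q + u * cfDenom a N) * (Q + v * cfDenom a N) ≤ 4 * Q ^ 2 := by
    nlinarith [mul_le_mul (hD u hu).2 (hD v hv).2 (hD v hv).1.le (by positivity)]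
  calc 1 / (4 * ((a (N + 2) + 1) * (b (N + 2) + 1)) * Q ^ 2)
      = 1 / ((a (N + 2) + 1) * (b (N + 2) + 1) : ℝ) / (4 * Q ^ 2) := by
        rw [div_div]
        ring_nf
    _ ≤ |u - v| / ((Q + u * cfDenom a N) * (Q + v * cfDenom a N)) :=
      div_le_div₀ (abs_nonneg _) huv hDD hDD4
    _ = dist x y := by rw [Real.dist_eq, ← hdist, mul_div_cancel_right₀ _ hDD.ne']

theorem stmt_16_general (m n : ℕ) (hn : 1 ≤ n)
    (α : ℕ → ℝ)
    (w w' : ℕ → ℕ) (hwpos : ∀ i, 1 ≤ w i) (hw'pos : ∀ i, 1 ≤ w' i)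
    (hwdig : ∀ i, n + 1 ≤ i → i ≤ n + m →
      Even (w i) ∧ α (i - n) ^ n ≤ (w i : ℝ) ∧ (w i : ℝ) ≤ 2 * α (i - n) ^ n)
    (hw'dig : ∀ i, n + 1 ≤ i → i ≤ n + m →
      Even (w' i) ∧ α (i - n) ^ n ≤ (w' i : ℝ) ∧ (w' i : ℝ) ≤ 2 * α (i - n) ^ n)
    (k : ℕ) (hk1 : 1 ≤ k) (hkm : k ≤ m)
    (hagree : ∀ i, 1 ≤ i → i ≤ n + k - 1 → w i = w' i)
    (hdiff : w (n + k) ≠ w' (n + k)) :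
    ∀ p ∈ cfCyl (n + m) w, ∀ q ∈ cfCyl (n + m) w',
      1 / (32 * (cfDenom w (n + k) : ℝ) ^ 2) ≤ dist p q := by
  intro p hp q hq
  obtain ⟨hAeven, hαA, -⟩ := hwdig (n + k) (by omega) (by omega)
  obtain ⟨hBeven, -, hBα⟩ := hw'dig (n + k) (by omega) (by omega)
  have hBA : (w' (n + k) : ℝ) ≤ 2 * w (n + k) := by linarith
  have hgap : w (n + k) + 2 ≤ w' (n + k) ∨ w' (n + k) + 2 ≤ w (n + k) := by
    obtain ⟨c, hc⟩ := hAeven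
    obtain ⟨d, hd⟩ := hBeven
    omega
  obtain ⟨N, hN⟩ : ∃ N, n + k = N + 2 := ⟨n + k - 2, by omega⟩
  rw [hN] at hBA hgap ⊢
  have hA1 : (1 : ℝ) ≤ w (N + 2) := by exact_mod_cast hwpos (N + 2)
  have hQ1 : (1 : ℝ) ≤ cfDenom w (N + 1) := by exact_mod_cast one_le_cfDenom hwpos (N + 1)
  have hAQ : (w (N + 2) * cfDenom w (N + 1) : ℝ) ≤ cfDenom w (N + 2) := by
    exact_mod_cast Nat.le_add_right _ _
  refine le_trans (one_div_le_one_div_of_le (by positivity) ?_)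
    (one_div_le_dist_of_mem_cfCyl hwpos (hw'pos (N + 2)) (fun i h1 h2 => hagree i h1 (by omega)) hgap
      (cfCyl_anti w (by omega) hp) (cfCyl_anti w' (by omega) hq))
  calc 4 * ((w (N + 2) + 1) * (w' (N + 2) + 1)) * (cfDenom w (N + 1) : ℝ) ^ 2
      ≤ 4 * (8 * w (N + 2) ^ 2) * (cfDenom w (N + 1) : ℝ) ^ 2 := by
        gcongr 4 * ?_ * _
        nlinarith
    _ = 32 * (w (N + 2) * cfDenom w (N + 1) : ℝ) ^ 2 := by ring
    _ ≤ 32 * (cfDenom w (N + 2) : ℝ) ^ 2 := by gcongr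

theorem stmt_16 (m n : ℕ) (hm : 1 ≤ m) (hn : 1 ≤ n)
    (α : ℕ → ℝ) (hα : ∀ i, 1 ≤ i → i ≤ m → 1 < α i)
    (w w' : ℕ → ℕ) (hwpos : ∀ i, 1 ≤ w i) (hw'pos : ∀ i, 1 ≤ w' i)
    (hwdig : ∀ i, n + 1 ≤ i → i ≤ n + m →
      Even (w i) ∧ α (i - n) ^ n ≤ (w i : ℝ) ∧ (w i : ℝ) ≤ 2 * α (i - n) ^ n)
    (hw'dig : ∀ i, n + 1 ≤ i → i ≤ n + m →
      Even (w' i) ∧ α (i - n) ^ n ≤ (w' i : ℝ) ∧ (w' i : ℝ) ≤ 2 * α (i - n) ^ n)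
    (k : ℕ) (hk1 : 1 ≤ k) (hkm : k ≤ m)
    (hagree : ∀ i, 1 ≤ i → i ≤ n + k - 1 → w i = w' i)
    (hdiff : w (n + k) ≠ w' (n + k)) :
    ∀ p ∈ cfCyl (n + m) w, ∀ q ∈ cfCyl (n + m) w',
      1 / (32 * (cfDenom w (n + k) : ℝ) ^ 2) ≤ dist p q :=
  stmt_16_general m n hn α w w' hwpos hw'pos hwdig hw'dig k hk1 hkm hagree hdiff
end
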